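/- Let N ≥ 1, let â : ℝ^N → ℝ, and let c₀ > 0. Suppose that for every t > 0 there exists a continuous integrable function G_t : ℝ^N → ℂ whose support is contained in the closed ball of radius c₀·t centered at the origin and whose Fourier transform satisfies 𝓕G_t(k) = exp(−â(k)·t) for all k ∈ ℝ^N. Then â extends to an entire function on ℂ^N: there exists a function A : ℂ^N → ℂ, complex-differentiable on all of ℂ^N, such that A(k) = â(k) for every k ∈ ℝ^N (viewing ℝ^N ⊆ ℂ^N coordinate-wise). -/

import Mathlib

open MeasureTheory
open scoped RealInnerProductSpace

/-- The Fourier transform `𝓕f(k) = (2π)^{-N/2} ∫ e^{i k·x} f(x) dx` used in the paper. -/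
noncomputable def paperFourier {N : ℕ} (f : EuclideanSpace ℝ (Fin N) → ℂ)
    (k : EuclideanSpace ℝ (Fin N)) : ℂ :=
  (((2 * Real.pi) ^ (-(N : ℝ) / 2) : ℝ) : ℂ) *
    ∫ x : EuclideanSpace ℝ (Fin N), Complex.exp (Complex.I * (⟪k, x⟫ : ℝ)) * f x

/-!
Since `G_t` is compactly supported, its Fourier integral makes sense for complex frequencies
and defines an entire function `F_t` on `ℂ^N` with `F_t = exp (-â t)` on `ℝ^N`. The identity
`F_{1/n} ^ n = F_1` holds on `ℝ^N`, hence on `ℂ^N`, so `F_1` has entire `n`-th roots for every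
`n`; restricted to a complex line through `0` (where `F_1 ≠ 0`) this forbids zeros of any finite
order, so `F_1` never vanishes. As `ℂ^N` is simply connected, `F_1 = exp (-A)` for an entire `A`,
and uniqueness of continuous lifts through `exp` on the connected space `ℝ^N` gives `A = â`
there.
-/

open Filter Topology Set

variable {E : Type*} [NormedAddCommGroup E] [NormedSpace ℂ E]

theorem norm_exp_apply_le (ℓ : E →L[ℂ] ℂ) (z : E) :
    ‖Complex.exp (ℓ z)‖ ≤ Real.exp (‖ℓ‖ * ‖z‖) := by
  rw [Complex.norm_exp]
  gcongr
  exact (Complex.re_le_norm _).trans (ℓ.le_opNorm z)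

theorem differentiable_integral_exp_mul {α : Type*} [MeasurableSpace α] {μ : Measure α}
    {g : α → ℂ} {ℓ : α → E →L[ℂ] ℂ} (hg : Integrable g μ)
    (hℓ : AEStronglyMeasurable ℓ μ) {R : ℝ} (hR : ∀ᵐ a ∂μ, g a ≠ 0 → ‖ℓ a‖ ≤ R) :
    Differentiable ℂ fun z => ∫ a, Complex.exp (ℓ a z) * g a ∂μ := by
  intro z₀
  have hmeas : ∀ z, AEStronglyMeasurable (fun a => Complex.exp (ℓ a z)) μ := fun z =>
    Complex.continuous_exp.comp_aestronglyMeasurable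
      ((ContinuousLinearMap.apply ℂ ℂ z).continuous.comp_aestronglyMeasurable hℓ)
  set C := Real.exp (R * (‖z₀‖ + 1))
  have hexp_le : ∀ᵐ a ∂μ, ∀ z ∈ Metric.ball z₀ 1, g a ≠ 0 →
      ‖Complex.exp (ℓ a z)‖ ≤ C := by
    filter_upwards [hR] with a ha z hz hga
    have hz' : ‖z‖ ≤ ‖z₀‖ + 1 := by
      linarith [norm_le_norm_add_norm_sub' z z₀, mem_ball_iff_norm.mp hz]
    refine (norm_exp_apply_le _ _).trans (Real.exp_le_exp.mpr ?_)
    have := ha hga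
    gcongr
    linarith [norm_nonneg (ℓ a)]
  have hint : Integrable (fun a => Complex.exp (ℓ a z₀) * g a) μ := by
    refine (hg.norm.const_mul C).mono' ((hmeas z₀).mul hg.1) ?_
    filter_upwards [hexp_le] with a ha
    rcases eq_or_ne (g a) 0 with hga | hga
    · simp [hga]
    · rw [norm_mul]
      gcongr
      exact ha z₀ (Metric.mem_ball_self one_pos) hga
  refine (hasFDerivAt_integral_of_dominated_of_fderiv_le
    (F' := fun z a => g a • Complex.exp (ℓ a z) • ℓ a) (bound := fun a => C * R * ‖g a‖)
    (Metric.ball_mem_nhds z₀ one_pos) (Eventually.of_forall fun z => (hmeas z).mul hg.1) hint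
    (hg.1.smul ((hmeas z₀).smul hℓ)) ?_ (hg.norm.const_mul _) ?_).differentiableAt
  · filter_upwards [hexp_le, hR] with a hexp hRa z hz
    rcases eq_or_ne (g a) 0 with hga | hga
    · simp [hga]
    · rw [norm_smul, norm_smul, mul_comm]
      gcongr
      exacts [hexp z hz hga, hRa hga]
  · exact Eventually.of_forall fun a z _ => (ℓ a).hasFDerivAt.cexp.mul_const (g a)

section complexifiedInner

variable {ι : Type*} [Fintype ι]

noncomputable def complexifiedInner (x : EuclideanSpace ℝ ι) : (ι → ℂ) →L[ℂ] ℂ :=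
  ∑ j, (x j : ℂ) • ContinuousLinearMap.proj j

theorem complexifiedInner_apply (x : EuclideanSpace ℝ ι) (z : ι → ℂ) :
    complexifiedInner x z = ∑ j, (x j : ℂ) * z j := by
  simp [complexifiedInner]

theorem complexifiedInner_ofReal (x k : EuclideanSpace ℝ ι) :
    complexifiedInner x (fun j => (k j : ℂ)) = (⟪k, x⟫ : ℝ) := by
  simp [complexifiedInner_apply, PiLp.inner_apply]

theorem continuous_complexifiedInner : Continuous (complexifiedInner (ι := ι)) :=
  continuous_finsetSum _ fun j _ => by fun_prop

end complexifiedInner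

noncomputable def paperFourierExt {N : ℕ} (f : EuclideanSpace ℝ (Fin N) → ℂ)
    (z : Fin N → ℂ) : ℂ :=
  (((2 * Real.pi) ^ (-(N : ℝ) / 2) : ℝ) : ℂ) *
    ∫ x : EuclideanSpace ℝ (Fin N), Complex.exp (Complex.I * complexifiedInner x z) * f x

theorem paperFourierExt_ofReal {N : ℕ} (f : EuclideanSpace ℝ (Fin N) → ℂ)
    (k : EuclideanSpace ℝ (Fin N)) :
    paperFourierExt f (fun j => (k j : ℂ)) = paperFourier f k := by
  simp only [paperFourierExt, paperFourier, complexifiedInner_ofReal]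

theorem differentiable_paperFourierExt {N : ℕ} {f : EuclideanSpace ℝ (Fin N) → ℂ}
    (hf : Integrable f) (hsupp : HasCompactSupport f) :
    Differentiable ℂ (paperFourierExt f) := by
  have hℓ : Continuous fun x : EuclideanSpace ℝ (Fin N) => Complex.I • complexifiedInner x :=
    continuous_complexifiedInner.const_smul Complex.I
  obtain ⟨R, hR⟩ := hsupp.exists_bound_of_continuousOn hℓ.continuousOn
  exact (differentiable_integral_exp_mul hf hℓ.aestronglyMeasurable
    (Eventually.of_forall fun x hx => hR x (subset_tsupport f hx))).const_mul _

theorem Differentiable.eq_of_forall_ofReal_eq {f g : ℂ → ℂ} (hf : Differentiable ℂ f)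
    (hg : Differentiable ℂ g) (hfg : ∀ x : ℝ, f x = g x) : f = g := by
  have hreal : Tendsto ((↑) : ℝ → ℂ) (𝓝[≠] 0) (𝓝[≠] 0) :=
    Complex.continuous_ofReal.continuousWithinAt.tendsto_nhdsWithin fun x hx => by
      simpa using hx
  exact AnalyticOnNhd.eq_of_frequently_eq (z₀ := 0) (fun z _ => hf.analyticAt z)
    (fun z _ => hg.analyticAt z) (hreal.frequently (Eventually.of_forall hfg).frequently)

theorem Differentiable.eq_of_forall_real_vector_eq {ι : Type*} [Fintype ι]
    {f g : (ι → ℂ) → ℂ} (hf : Differentiable ℂ f) (hg : Differentiable ℂ g)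
    (hfg : ∀ x : ι → ℝ, f (fun i => x i) = g (fun i => x i)) : f = g := by
  funext z
  -- the complex line through `Re z` in direction `Im z` meets `ℝ^ι` in a real line
  let line : ℂ → ι → ℂ := fun w i => (z i).re + w * (z i).im
  have hline : Differentiable ℂ line := by fun_prop
  have hline_eq := (hf.comp hline).eq_of_forall_ofReal_eq (hg.comp hline) fun x => by
    simpa [line] using hfg fun i => (z i).re + x * (z i).im
  have hline_I : line Complex.I = z := by
    funext i
    simp only [line, mul_comm Complex.I]
    exact Complex.re_add_im (z i)
  simpa [hline_I] using congrFun hline_eq Complex.I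

theorem ne_zero_of_forall_exists_pow_eq {𝕜 : Type*} [NontriviallyNormedField 𝕜]
    {φ : 𝕜 → 𝕜} {z : 𝕜} (hφ : analyticOrderAt φ z ≠ ⊤)
    (hroots : ∀ n : ℕ, 0 < n → ∃ ψ : 𝕜 → 𝕜, AnalyticAt 𝕜 ψ z ∧ ψ ^ n = φ) :
    φ z ≠ 0 := by
  intro hφz
  set m := (analyticOrderAt φ z).toNat
  -- a zero of order `m` has no `(m + 1)`-st root
  obtain ⟨ψ, hψ, hψφ⟩ := hroots (m + 1) m.succ_pos
  have hψz : ψ z = 0 := by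
    rw [← hψφ, Pi.pow_apply] at hφz
    exact pow_eq_zero_iff m.succ_ne_zero |>.mp hφz
  have hord : (m : ℕ∞) = (m + 1) • analyticOrderAt ψ z := by
    rw [ENat.natCast_toNat hφ, ← hψφ, analyticOrderAt_pow hψ]
  obtain ⟨p, hp⟩ : ∃ p : ℕ, (p : ℕ∞) = analyticOrderAt ψ z :=
    ENat.ne_top_iff_exists.mp fun htop => by simp [htop] at hord
  have hp_pos : p ≠ 0 := by
    rintro rfl
    exact (analyticOrderAt_eq_zero.mp hp.symm).resolve_left (not_not.mpr hψ) hψz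
  rw [← hp, nsmul_eq_mul] at hord
  have : m = (m + 1) * p := by exact_mod_cast hord
  nlinarith [Nat.one_le_iff_ne_zero.mpr hp_pos]

theorem Differentiable.ne_zero_of_forall_exists_pow_eq {F : E → ℂ}
    (hF : Differentiable ℂ F) {z₀ : E} (hz₀ : F z₀ ≠ 0)
    (hroots : ∀ n : ℕ, 0 < n → ∃ Fₙ : E → ℂ, Differentiable ℂ Fₙ ∧ Fₙ ^ n = F) (z : E) :
    F z ≠ 0 := by
  let line : ℂ → E := fun w => z₀ + w • (z - z₀)
  have hline : Differentiable ℂ line := by fun_prop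
  have hord : analyticOrderAt (F ∘ line) 1 ≠ ⊤ :=
    AnalyticOnNhd.analyticOrderAt_ne_top_of_isPreconnected
      (fun w _ => (hF.comp hline).analyticAt w) isPreconnected_univ (mem_univ 0)
      (mem_univ 1) <| by
        rw [analyticOrderAt_eq_zero.mpr (Or.inr (by simpa [line] using hz₀))]
        exact ENat.zero_ne_top
  have := _root_.ne_zero_of_forall_exists_pow_eq hord fun n hn => by
    obtain ⟨Fₙ, hFₙ, hpow⟩ := hroots n hn
    exact ⟨Fₙ ∘ line, (hFₙ.comp hline).analyticAt 1, by rw [← hpow]; rfl⟩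
  simpa [line] using this

theorem DifferentiableAt.of_exp_eq {f L : E → ℂ} {z : E} (hf : DifferentiableAt ℂ f z)
    (hL : ContinuousAt L z) (hexp : ∀ x, Complex.exp (L x) = f x) :
    DifferentiableAt ℂ L z := by
  have hfz : f z ≠ 0 := hexp z ▸ Complex.exp_ne_zero _
  have hlocal : (fun x => L z + Complex.log (f x * (f z)⁻¹)) =ᶠ[𝓝 z] L := by
    filter_upwards [hL.preimage_mem_nhds (Metric.ball_mem_nhds (L z) Real.pi_pos)] with x hx
    have him : |(L x - L z).im| < Real.pi :=
      (Complex.abs_im_le_norm _).trans_lt (by simpa [dist_eq_norm] using hx)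
    rw [← hexp x, ← hexp z, ← div_eq_mul_inv, ← Complex.exp_sub,
      Complex.log_exp (by linarith [abs_lt.mp him]) (by linarith [abs_lt.mp him]),
      add_sub_cancel]
  refine DifferentiableAt.congr_of_eventuallyEq ?_ hlocal.symm
  exact (differentiableAt_const _).add
    ((hf.mul_const _).clog (by simp [hfz, Complex.one_mem_slitPlane]))

theorem Differentiable.exists_exp_eq {f : E → ℂ} (hf : Differentiable ℂ f)
    (hf0 : ∀ z, f z ≠ 0) {z₀ : E} {w₀ : ℂ} (hw₀ : Complex.exp w₀ = f z₀) :
    ∃ L : E → ℂ, Differentiable ℂ L ∧ L z₀ = w₀ ∧ ∀ z, Complex.exp (L z) = f z := by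
  obtain ⟨L, ⟨hLz₀, hLf⟩, -⟩ :=
    Complex.isCoveringMapOn_exp.existsUnique_continuousMap_lifts ⟨f, hf.continuous⟩ hw₀ hf0
  have hexp : ∀ z, Complex.exp (L z) = f z := congrFun hLf
  exact ⟨L, fun z => (hf z).of_exp_eq L.continuous.continuousAt hexp, hLz₀, hexp⟩

theorem Complex.eq_of_exp_comp_eq {A : Type*} [TopologicalSpace A] [PreconnectedSpace A]
    {g₁ g₂ : A → ℂ} (h₁ : Continuous g₁) (h₂ : Continuous g₂)
    (he : ∀ a, Complex.exp (g₁ a) = Complex.exp (g₂ a)) {a₀ : A} (ha₀ : g₁ a₀ = g₂ a₀) :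
    g₁ = g₂ :=
  Complex.isCoveringMap_exp.eq_of_comp_eq h₁ h₂ (funext fun a => Subtype.ext (he a)) a₀ ha₀

theorem stmt_1 (N : ℕ) (ahat : EuclideanSpace ℝ (Fin N) → ℝ)
    (c₀ : ℝ)
    (h : ∀ t : ℝ, 0 < t → ∃ G : EuclideanSpace ℝ (Fin N) → ℂ,
      Continuous G ∧ Integrable G ∧
      tsupport G ⊆ Metric.closedBall (0 : EuclideanSpace ℝ (Fin N)) (c₀ * t) ∧
      ∀ k : EuclideanSpace ℝ (Fin N),
        paperFourier G k = Complex.exp (-(ahat k * t))) :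
    ∃ A : (Fin N → ℂ) → ℂ, Differentiable ℂ A ∧
      ∀ k : EuclideanSpace ℝ (Fin N), A (fun j => (k j : ℂ)) = (ahat k : ℂ) := by
  choose! G _ hG_int hG_supp hG_fourier using h
  set F : ℝ → (Fin N → ℂ) → ℂ := fun t => paperFourierExt (G t)
  have hF_diff : ∀ t, 0 < t → Differentiable ℂ (F t) := fun t ht =>
    differentiable_paperFourierExt (hG_int t ht)
      ((isCompact_closedBall _ _).of_isClosed_subset (isClosed_tsupport _) (hG_supp t ht))
  have hF_real : ∀ t, 0 < t → ∀ k : EuclideanSpace ℝ (Fin N),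
      F t (fun j => (k j : ℂ)) = Complex.exp (-(ahat k * t)) := fun t ht k =>
    (paperFourierExt_ofReal _ k).trans (hG_fourier t ht k)
  have hF_roots : ∀ n : ℕ, 0 < n → ∃ Fₙ, Differentiable ℂ Fₙ ∧ Fₙ ^ n = F 1 := by
    intro n hn
    have hn' : (0 : ℝ) < 1 / n := by positivity
    refine ⟨F (1 / n), hF_diff _ hn',
      ((hF_diff _ hn').pow n).eq_of_forall_real_vector_eq (hF_diff 1 one_pos) fun x => ?_⟩
    have h1 : F (1 / n) (fun j => (x j : ℂ)) = _ := hF_real _ hn' (WithLp.toLp 2 x)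
    have h2 : F 1 (fun j => (x j : ℂ)) = _ := hF_real 1 one_pos (WithLp.toLp 2 x)
    rw [Pi.pow_apply, h1, h2, ← Complex.exp_nat_mul]
    have hn0 : (n : ℂ) ≠ 0 := by exact_mod_cast hn.ne'
    push_cast
    field_simp
  have hF_zero : F 1 0 = Complex.exp (-(ahat 0 : ℂ)) := by
    simpa [← Pi.zero_def] using hF_real 1 one_pos 0
  have hF_ne : ∀ z, F 1 z ≠ 0 := (hF_diff 1 one_pos).ne_zero_of_forall_exists_pow_eq
    (hF_zero ▸ Complex.exp_ne_zero _) hF_roots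
  obtain ⟨L, hL, hL_zero, hL_exp⟩ := (hF_diff 1 one_pos).exists_exp_eq hF_ne hF_zero.symm
  set Lr : EuclideanSpace ℝ (Fin N) → ℂ := fun k => L (fun j => (k j : ℂ))
  have hLr_exp : ∀ k, Complex.exp (Lr k) = Complex.exp (-(ahat k : ℂ)) := fun k => by
    simpa [Lr, hL_exp] using hF_real 1 one_pos k
  have hahat : ahat = fun k => -(Lr k).re := by
    funext k
    have := congrArg norm (hLr_exp k)
    simp only [Complex.norm_exp, Real.exp_eq_exp] at this
    simp [this]
  have hLr_cont : Continuous Lr := hL.continuous.comp (by fun_prop)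
  have hLr : Lr = fun k => -(ahat k : ℂ) :=
    Complex.eq_of_exp_comp_eq hLr_cont (by rw [hahat]; fun_prop) hLr_exp (a₀ := 0)
      (by simpa [Lr, ← Pi.zero_def] using hL_zero)
  exact ⟨fun z => -L z, hL.neg, fun k => neg_eq_iff_eq_neg.mpr (congrFun hLr k)⟩
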